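/- For a discretized Brownian bridge with round trip d = 0 (start and end both at the origin), uniform grid with n ≥ 2 points, diffusion coefficient σ_m > 0 and total time T > 0, the expected path length equals σ_m·√((π/2)·T(n-1)). -/

import Mathlib

/-! With `u = (t - s) / T`, the increment of the bridge `W t - t / T * W T` over `[s, t]` is
`-u (W s - W 0) + (1 - u) (W t - W s) - u (W T - W t)`, a combination of independent centred
Gaussians, hence centred Gaussian with variance `(t - s) (T - (t - s)) / T`; on the uniform grid
this is `T (n - 1) / n ^ 2`. The two coordinates are independent, so each step of `Z` has length
`σm` times a Rayleigh variable, whose mean `√(π v / 2)` is a radial integral in polar coordinates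
(a Gamma integral). Summing the `n` equal expectations gives the result. -/

open MeasureTheory ProbabilityTheory Real

/-- `W` is a standard one-dimensional Brownian motion under `P`. -/
def IsStdBrownian {Ω : Type*} [MeasurableSpace Ω] (P : Measure Ω) (W : ℝ → Ω → ℝ) : Prop :=
  (∀ t, Measurable (W t)) ∧
  (∀ᵐ ω ∂P, W 0 ω = 0) ∧
  (∀ s t : ℝ, 0 ≤ s → s ≤ t →
    Measure.map (fun ω => W t ω - W s ω) P = gaussianReal 0 (t - s).toNNReal) ∧
  (∀ n : ℕ, ∀ t : Fin (n + 1) → ℝ, Monotone t → (∀ i, 0 ≤ t i) →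
    iIndepFun
      (fun (i : Fin n) ω => W (t i.succ) ω - W (t i.castSucc) ω) P) ∧
  (∀ᵐ ω ∂P, Continuous fun t => W t ω)

open Set
open scoped NNReal

lemma integral_comp_sqrt_sq_add_sq {E : Type*} [NormedAddCommGroup E] [NormedSpace ℝ E]
    (G : ℝ → E) :
    ∫ p : ℝ × ℝ, G √(p.1 ^ 2 + p.2 ^ 2) = (2 * π) • ∫ r in Ioi (0 : ℝ), r • G r := by
  rw [← Complex.volume_preserving_equiv_real_prod.integral_comp
    Complex.measurableEquivRealProd.measurableEmbedding]
  simp only [Complex.measurableEquivRealProd_apply, ← Complex.norm_eq_sqrt_sq_add_sq]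
  simp [integral_fun_norm_addHaar, Complex.finrank_real_complex, Measure.real, mul_smul,
    ofNat_smul_eq_nsmul]

lemma integral_Ioi_sq_mul_exp_neg_mul_sq {b : ℝ} (hb : 0 < b) :
    ∫ r in Ioi (0 : ℝ), r ^ 2 * exp (-b * r ^ 2) = √π / (4 * b * √b) := by
  have hΓ : Gamma (3 / 2) = √π / 2 := by
    rw [show (3 / 2 : ℝ) = 1 / 2 + 1 by norm_num, Gamma_add_one (by norm_num), Gamma_one_half_eq]
    ring
  have hb32 : b ^ (-(3 / 2) : ℝ) = (b * √b)⁻¹ := by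
    rw [rpow_neg hb.le, show (3 / 2 : ℝ) = 1 + 1 / 2 by norm_num, rpow_add hb, rpow_one,
      ← sqrt_eq_rpow]
  have h := integral_rpow_mul_exp_neg_mul_rpow (p := 2) (q := 2) two_pos (by norm_num) hb
  norm_num [rpow_two] at h
  simp_rw [neg_mul]
  rw [h, hb32, hΓ]
  field_simp
  ring

lemma gaussianPDFReal_zero_mul_gaussianPDFReal_zero (v : ℝ≥0) (x y : ℝ) :
    gaussianPDFReal 0 v x * gaussianPDFReal 0 v y
      = (2 * π * v)⁻¹ * exp (-(x ^ 2 + y ^ 2) / (2 * v)) := by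
  simp only [gaussianPDFReal, sub_zero]
  rw [mul_mul_mul_comm, ← mul_inv, mul_self_sqrt (by positivity), ← exp_add, neg_add, add_div]

lemma integral_gaussianReal_prod_gaussianReal {E : Type*} [NormedAddCommGroup E]
    [NormedSpace ℝ E] {v : ℝ≥0} (hv : v ≠ 0) (f : ℝ × ℝ → E) :
    ∫ p, f p ∂(gaussianReal 0 v).prod (gaussianReal 0 v)
      = ∫ p, ((2 * π * v)⁻¹ * exp (-(p.1 ^ 2 + p.2 ^ 2) / (2 * v))) • f p := by
  rw [gaussianReal_of_var_ne_zero 0 hv, prod_withDensity (measurable_gaussianPDF 0 v)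
    (measurable_gaussianPDF 0 v), ← Measure.volume_eq_prod,
    integral_withDensity_eq_integral_toReal_smul (by fun_prop)
      (ae_of_all _ fun _ => ENNReal.mul_lt_top gaussianPDF_lt_top gaussianPDF_lt_top)]
  simp only [gaussianPDF, ENNReal.toReal_mul, ENNReal.toReal_ofReal (gaussianPDFReal_nonneg _ _ _),
    gaussianPDFReal_zero_mul_gaussianPDFReal_zero]

lemma integral_sqrt_sq_add_sq_gaussianReal_prod (v : ℝ≥0) :
    ∫ p, √(p.1 ^ 2 + p.2 ^ 2) ∂(gaussianReal 0 v).prod (gaussianReal 0 v) = √(π * v / 2) := by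
  rcases eq_or_ne v 0 with rfl | hv
  · simp [Measure.dirac_prod_dirac]
  have hv' : (0 : ℝ) < v := by positivity
  set G : ℝ → ℝ := fun r => (2 * π * v)⁻¹ * exp (-r ^ 2 / (2 * v)) * r
  have hradial : ∀ p : ℝ × ℝ, ((2 * π * v)⁻¹ * exp (-(p.1 ^ 2 + p.2 ^ 2) / (2 * v)))
      • √(p.1 ^ 2 + p.2 ^ 2) = G √(p.1 ^ 2 + p.2 ^ 2) := fun p => by
    simp only [G, sq_sqrt (by positivity : 0 ≤ p.1 ^ 2 + p.2 ^ 2), smul_eq_mul]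
  rw [integral_gaussianReal_prod_gaussianReal hv, integral_congr_ae (ae_of_all _ hradial),
    integral_comp_sqrt_sq_add_sq]
  have hb : 0 < (2 * (v : ℝ))⁻¹ := by positivity
  calc (2 * π) • ∫ r in Ioi (0 : ℝ), r • G r
      = (v : ℝ)⁻¹ * ∫ r in Ioi (0 : ℝ), r ^ 2 * exp (-(2 * (v : ℝ))⁻¹ * r ^ 2) := by
        rw [smul_eq_mul, ← integral_const_mul, ← integral_const_mul]
        refine setIntegral_congr_fun measurableSet_Ioi fun r _ => ?_
        simp only [G, smul_eq_mul]
        field_simp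
    _ = √(π * v / 2) := by
        rw [integral_Ioi_sq_mul_exp_neg_mul_sq hb, sqrt_inv, sqrt_div' _ two_pos.le,
          sqrt_mul two_pos.le, sqrt_mul' _ hv'.le]
        field_simp
        norm_num

lemma integrable_sqrt_sq_add_sq_gaussianReal_prod (μ₁ μ₂ : ℝ) (v₁ v₂ : ℝ≥0) :
    Integrable (fun p : ℝ × ℝ => √(p.1 ^ 2 + p.2 ^ 2))
      ((gaussianReal μ₁ v₁).prod (gaussianReal μ₂ v₂)) := by
  have h₁ := ((memLp_id_gaussianReal (μ := μ₁) (v := v₁) 1).integrable le_rfl).abs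
  have h₂ := ((memLp_id_gaussianReal (μ := μ₂) (v := v₂) 1).integrable le_rfl).abs
  refine ((h₁.comp_fst _).add (h₂.comp_snd _)).mono' (by fun_prop) (ae_of_all _ fun p => ?_)
  rw [norm_of_nonneg (sqrt_nonneg _), ← Complex.norm_eq_sqrt_sq_add_sq ⟨p.1, p.2⟩]
  exact Complex.norm_le_abs_re_add_abs_im _

namespace ProbabilityTheory

variable {Ω : Type*} [MeasurableSpace Ω] {P : Measure Ω} [IsProbabilityMeasure P]

lemma iIndepFun.hasLaw_sum_const_mul_gaussianReal {ι : Type*} {f : ι → Ω → ℝ} {v : ι → ℝ≥0}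
    (hind : iIndepFun f P) (hf : ∀ i, HasLaw (f i) (gaussianReal 0 (v i)) P) (c : ι → ℝ)
    (s : Finset ι) :
    HasLaw (fun ω => ∑ i ∈ s, c i * f i ω)
      (gaussianReal 0 (∑ i ∈ s, .mk (c i ^ 2) (sq_nonneg _) * v i)) P := by
  classical
  induction s using Finset.induction_on with
  | empty => simpa using hasLaw_dirac_of_ae_eq (P := P) (x := (0 : ℝ)) (ae_of_all _ fun _ => rfl)
  | insert j s hj ih =>
    have hindep : IndepFun (fun ω => c j * f j ω) (fun ω => ∑ i ∈ s, c i * f i ω) P := by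
      have := (hind.comp (fun i x => c i * x) fun i => measurable_const_mul (c i))
        |>.indepFun_finsetSum_of_notMem₀ (fun i => (hf i).aemeasurable.const_mul (c i)) hj
      simpa [Finset.sum_fn, Function.comp_def] using this.symm
    simp only [Finset.sum_insert hj]
    simpa [gaussianReal_conv_gaussianReal] using
      hindep.hasLaw_fun_add (gaussianReal_const_mul (hf j) (c j)) ih

lemma IndepFun.integrable_sqrt_sq_add_sq {X Y : Ω → ℝ} {μ₁ μ₂ : ℝ} {v₁ v₂ : ℝ≥0}
    (hX : HasLaw X (gaussianReal μ₁ v₁) P) (hY : HasLaw Y (gaussianReal μ₂ v₂) P)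
    (hXY : IndepFun X Y P) :
    Integrable (fun ω => √(X ω ^ 2 + Y ω ^ 2)) P := by
  have hpair := hXY.hasLaw_prod hX hY
  have := integrable_sqrt_sq_add_sq_gaussianReal_prod μ₁ μ₂ v₁ v₂
  rw [← hpair.map_eq] at this
  exact (integrable_map_measure (by fun_prop) hpair.aemeasurable).mp this

lemma IndepFun.integral_sqrt_sq_add_sq {X Y : Ω → ℝ} {v : ℝ≥0}
    (hX : HasLaw X (gaussianReal 0 v) P) (hY : HasLaw Y (gaussianReal 0 v) P)
    (hXY : IndepFun X Y P) :
    ∫ ω, √(X ω ^ 2 + Y ω ^ 2) ∂P = √(π * v / 2) := by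
  rw [← integral_sqrt_sq_add_sq_gaussianReal_prod,
    ← (hXY.hasLaw_prod hX hY).integral_comp (by fun_prop)]
  rfl

end ProbabilityTheory

noncomputable def brownianBridge {Ω : Type*} (W : ℝ → Ω → ℝ) (T : ℝ) : ℝ → Ω → ℝ :=
  fun t ω => W t ω - t / T * W T ω

namespace IsStdBrownian

variable {Ω : Type*} [MeasurableSpace Ω] {P : Measure Ω} {W : ℝ → Ω → ℝ}

lemma hasLaw_sub (hW : IsStdBrownian P W) {s t : ℝ} (hs : 0 ≤ s) (hst : s ≤ t) :
    HasLaw (fun ω => W t ω - W s ω) (gaussianReal 0 (t - s).toNNReal) P :=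
  ⟨((hW.1 t).sub (hW.1 s)).aemeasurable, hW.2.2.1 s t hs hst⟩

lemma hasLaw_brownianBridge_sub [IsProbabilityMeasure P] (hW : IsStdBrownian P W) {T s t : ℝ}
    (hT : 0 < T) (hs : 0 ≤ s) (hst : s ≤ t) (htT : t ≤ T) :
    HasLaw (fun ω => brownianBridge W T t ω - brownianBridge W T s ω)
      (gaussianReal 0 ((t - s) * (T - (t - s)) / T).toNNReal) P := by
  set τ : Fin 4 → ℝ := ![0, s, t, T]
  have hτ : Monotone τ := by
    refine Fin.monotone_iff_le_succ.mpr fun i => ?_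
    fin_cases i
    exacts [hs, hst, htT]
  have hτ₀ : ∀ i, 0 ≤ τ i := fun i => hτ (Fin.zero_le i)
  have hlaw : ∀ i : Fin 3, HasLaw (fun ω => W (τ i.succ) ω - W (τ i.castSucc) ω)
      (gaussianReal 0 (τ i.succ - τ i.castSucc).toNNReal) P :=
    fun i => hW.hasLaw_sub (hτ₀ _) (hτ (Fin.castSucc_le_succ i))
  set u := (t - s) / T with hu
  have hsum := (hW.2.2.2.1 3 τ hτ hτ₀).hasLaw_sum_const_mul_gaussianReal hlaw
    ![-u, 1 - u, -u] Finset.univ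
  have hvar : ∑ i, .mk (![-u, 1 - u, -u] i ^ 2) (sq_nonneg _) * (τ i.succ - τ i.castSucc).toNNReal
      = ((t - s) * (T - (t - s)) / T).toNNReal := by
    have hnonneg : 0 ≤ (t - s) * (T - (t - s)) / T :=
      div_nonneg (mul_nonneg (by linarith) (by linarith)) hT.le
    have hreal : (-u) ^ 2 * s + (1 - u) ^ 2 * (t - s) + (-u) ^ 2 * (T - t)
        = (t - s) * (T - (t - s)) / T := by
      rw [hu]
      field_simp
      ring
    apply NNReal.coe_injective
    simpa [Fin.sum_univ_three, τ, hs, hst, htT, hnonneg] using hreal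
  rw [← hvar]
  refine hsum.congr ?_
  filter_upwards [hW.2.1] with ω hω
  rw [Fin.sum_univ_three]
  change _ = -u * (W s ω - W 0 ω) + (1 - u) * (W t ω - W s ω) + -u * (W T ω - W t ω)
  rw [hω, brownianBridge, brownianBridge, hu]
  ring

end IsStdBrownian

section BrownianBridgePair

variable {Ω : Type*} [MeasurableSpace Ω] {P : Measure Ω} {W₁ W₂ : ℝ → Ω → ℝ} {T s t : ℝ}

lemma indepFun_brownianBridge_sub
    (hWindep : IndepFun (fun ω t => W₁ t ω) (fun ω t => W₂ t ω) P) :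
    IndepFun (fun ω => brownianBridge W₁ T t ω - brownianBridge W₁ T s ω)
      (fun ω => brownianBridge W₂ T t ω - brownianBridge W₂ T s ω) P := by
  have hφ : Measurable fun f : ℝ → ℝ => (f t - t / T * f T) - (f s - s / T * f T) := by fun_prop
  exact hWindep.comp hφ hφ

lemma integrable_sqrt_brownianBridge_sub [IsProbabilityMeasure P]
    (hW₁ : IsStdBrownian P W₁) (hW₂ : IsStdBrownian P W₂)
    (hWindep : IndepFun (fun ω t => W₁ t ω) (fun ω t => W₂ t ω) P)
    (hT : 0 < T) (hs : 0 ≤ s) (hst : s ≤ t) (htT : t ≤ T) :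
    Integrable (fun ω => √((brownianBridge W₁ T t ω - brownianBridge W₁ T s ω) ^ 2
      + (brownianBridge W₂ T t ω - brownianBridge W₂ T s ω) ^ 2)) P :=
  (indepFun_brownianBridge_sub hWindep).integrable_sqrt_sq_add_sq
    (hW₁.hasLaw_brownianBridge_sub hT hs hst htT) (hW₂.hasLaw_brownianBridge_sub hT hs hst htT)

lemma integral_sqrt_brownianBridge_sub [IsProbabilityMeasure P]
    (hW₁ : IsStdBrownian P W₁) (hW₂ : IsStdBrownian P W₂)
    (hWindep : IndepFun (fun ω t => W₁ t ω) (fun ω t => W₂ t ω) P)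
    (hT : 0 < T) (hs : 0 ≤ s) (hst : s ≤ t) (htT : t ≤ T) :
    ∫ ω, √((brownianBridge W₁ T t ω - brownianBridge W₁ T s ω) ^ 2
      + (brownianBridge W₂ T t ω - brownianBridge W₂ T s ω) ^ 2) ∂P
      = √(π * ((t - s) * (T - (t - s)) / T) / 2) := by
  rw [(indepFun_brownianBridge_sub hWindep).integral_sqrt_sq_add_sq
    (hW₁.hasLaw_brownianBridge_sub hT hs hst htT) (hW₂.hasLaw_brownianBridge_sub hT hs hst htT),
    Real.coe_toNNReal _ (div_nonneg (mul_nonneg (by linarith) (by linarith)) hT.le)]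

end BrownianBridgePair

theorem round_trip_expected_path_length_general
    {Ω : Type*} [MeasurableSpace Ω] (P : Measure Ω) [IsProbabilityMeasure P]
    (W₁ W₂ : ℝ → Ω → ℝ) (hW₁ : IsStdBrownian P W₁) (hW₂ : IsStdBrownian P W₂)
    (hWindep : IndepFun (fun ω t => W₁ t ω) (fun ω t => W₂ t ω) P)
    (T : ℝ) (hT : 0 < T) (σm : ℝ) (hσm : 0 < σm)
    (X Y : ℝ → Ω → ℝ)
    (hX : ∀ t ω, X t ω = W₁ t ω - (t / T) * W₁ T ω)
    (hY : ∀ t ω, Y t ω = W₂ t ω - (t / T) * W₂ T ω)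
    (Z : ℝ → Ω → ℝ × ℝ)
    (hZ : ∀ t ω, Z t ω = (σm * X t ω, σm * Y t ω))
    (n : ℕ) :
    ∫ ω, (∑ k ∈ Finset.range n,
        Real.sqrt (((Z ((k + 1 : ℕ) * T / n) ω).1 - (Z (k * T / n) ω).1)^2
                 + ((Z ((k + 1 : ℕ) * T / n) ω).2 - (Z (k * T / n) ω).2)^2)) ∂P
      = σm * Real.sqrt (π / 2 * (T * (n - 1))) := by
  obtain rfl : X = brownianBridge W₁ T := funext₂ hX
  obtain rfl : Y = brownianBridge W₂ T := funext₂ hY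
  have hscale : ∀ t s ω, √(((Z t ω).1 - (Z s ω).1) ^ 2 + ((Z t ω).2 - (Z s ω).2) ^ 2)
      = σm * √((brownianBridge W₁ T t ω - brownianBridge W₁ T s ω) ^ 2
          + (brownianBridge W₂ T t ω - brownianBridge W₂ T s ω) ^ 2) := fun t s ω => by
    rw [hZ, hZ, ← mul_sub, ← mul_sub, mul_pow, mul_pow, ← mul_add, sqrt_mul (sq_nonneg _),
      sqrt_sq hσm.le]
  simp_rw [hscale]
  rcases n.eq_zero_or_pos with rfl | hn
  · -- `Real.sqrt` of the negative `π / 2 * (T * (0 - 1))` is `0`.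
    simp [sqrt_eq_zero', hT.le, pi_pos]
  have hn' : (0 : ℝ) < n := Nat.cast_pos.mpr hn
  have hgrid : ∀ k ∈ Finset.range n,
      0 ≤ k * T / n ∧ k * T / n ≤ (k + 1 : ℕ) * T / n ∧ (k + 1 : ℕ) * T / n ≤ T := by
    intro k hk
    have hk' : ((k + 1 : ℕ) : ℝ) ≤ n := by exact_mod_cast Finset.mem_range.mp hk
    refine ⟨by positivity, by gcongr; simp, ?_⟩
    rw [div_le_iff₀ hn']
    nlinarith
  have hstep : ∀ k : ℕ, ((k + 1 : ℕ) * T / n - k * T / n : ℝ) = T / n := fun k => by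
    push_cast
    ring
  rw [integral_finsetSum _ fun k hk => (integrable_sqrt_brownianBridge_sub hW₁ hW₂ hWindep hT
    (hgrid k hk).1 (hgrid k hk).2.1 (hgrid k hk).2.2).const_mul σm]
  rw [Finset.sum_congr rfl fun k hk => by rw [integral_const_mul, integral_sqrt_brownianBridge_sub
    hW₁ hW₂ hWindep hT (hgrid k hk).1 (hgrid k hk).2.1 (hgrid k hk).2.2, hstep]]
  rw [Finset.sum_const, Finset.card_range, nsmul_eq_mul,
    show π * (T / n * (T - T / n) / T) / 2 = π / 2 * (T * (n - 1)) / n ^ 2 by field_simp,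
    sqrt_div' _ (sq_nonneg _), sqrt_sq hn'.le]
  field_simp

theorem round_trip_expected_path_length
    {Ω : Type*} [MeasurableSpace Ω] (P : Measure Ω) [IsProbabilityMeasure P]
    (W₁ W₂ : ℝ → Ω → ℝ) (hW₁ : IsStdBrownian P W₁) (hW₂ : IsStdBrownian P W₂)
    (hWindep : IndepFun (fun ω t => W₁ t ω) (fun ω t => W₂ t ω) P)
    (T : ℝ) (hT : 0 < T) (σm : ℝ) (hσm : 0 < σm)
    (X Y : ℝ → Ω → ℝ)
    (hX : ∀ t ω, X t ω = W₁ t ω - (t / T) * W₁ T ω)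
    (hY : ∀ t ω, Y t ω = W₂ t ω - (t / T) * W₂ T ω)
    (Z : ℝ → Ω → ℝ × ℝ)
    (hZ : ∀ t ω, Z t ω = (σm * X t ω, σm * Y t ω))
    (n : ℕ) (hn : 2 ≤ n) :
    ∫ ω, (∑ k ∈ Finset.range n,
        Real.sqrt (((Z ((k + 1 : ℕ) * T / n) ω).1 - (Z (k * T / n) ω).1)^2
                 + ((Z ((k + 1 : ℕ) * T / n) ω).2 - (Z (k * T / n) ω).2)^2)) ∂P
      = σm * Real.sqrt (π / 2 * (T * (n - 1))) :=
  round_trip_expected_path_length_general P W₁ W₂ hW₁ hW₂ hWindep T hT σm hσm X Y hX hY Z hZ n
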